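/- arXiv:math/0702562 — 2 statements merged into one kernel-verified Lean document; each statement's English description precedes it below -/
import Mathlib

section
/- Let A be an artin algebra. The following are equivalent: (a) rad^∞(M,N) = 0 for all indecomposable M, N not in L_A ∪ R_A; (b) rad^∞(M,N) = 0 for all indecomposable M not in L_A and N not in R_A. -/
/-!
Abstract axiomatization of the Auslander–Reiten-theoretic structure of the
category `ind A` of (representatives of iso-classes of) indecomposable finitely
generated modules over an artin algebra `A`, following D. Smith,
"Almost laura algebras".
-/

/-- The Auslander–Reiten data of an artin algebra `A`. -/
structure ARData where
  /-- representatives of the isomorphism classes of indecomposable modules (`ind A`) -/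
  Ind : Type
  /-- `HomNZ M N` : there exists a nonzero morphism `M → N` -/
  HomNZ : Ind → Ind → Prop
  /-- `RadHom M N` : there exists a nonzero non-isomorphism (radical morphism) `M → N` -/
  RadHom : Ind → Ind → Prop
  /-- `RadInf M N` : `rad^∞(M, N) ≠ 0` -/
  RadInf : Ind → Ind → Prop
  /-- `pdLeOne M` : the projective dimension of `M` is at most 1 -/
  pdLeOne : Ind → Prop
  /-- `idLeOne M` : the injective dimension of `M` is at most 1 -/
  idLeOne : Ind → Prop
  /-- `M` is projective -/
  Proj : Ind → Prop
  /-- `M` is injective -/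
  Inj : Ind → Prop
  /-- `Irr M N` : there exists an irreducible morphism `M → N` (arrow of the AR-quiver) -/
  Irr : Ind → Ind → Prop
  /-- the Auslander–Reiten translate `τ = DTr` (arbitrary value on projectives) -/
  tau : Ind → Ind
  homNZ_of_radHom : ∀ {M N}, RadHom M N → HomNZ M N
  radHom_of_radInf : ∀ {M N}, RadInf M N → RadHom M N
  homNZ_of_irr : ∀ {M N}, Irr M N → HomNZ M N

namespace ARData

variable (A : ARData)

/-- A path (possibly trivial) of nonzero morphisms between indecomposable modules:
`Path N M` means `N` is a predecessor of `M` (and `M` a successor of `N`). -/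
def Path : A.Ind → A.Ind → Prop := Relation.ReflTransGen A.HomNZ

/-- An infinite path from `M` to `N`: a path of nonzero morphisms some morphism of
which lies in `rad^∞(mod A)`. -/
def InfPath (M N : A.Ind) : Prop := ∃ X Y, A.Path M X ∧ A.RadInf X Y ∧ A.Path Y N

/-- The left part `L_A` of `mod A`: indecomposables all of whose predecessors have
projective dimension at most one. -/
def leftPart : Set A.Ind := {M | ∀ N, A.Path N M → A.pdLeOne N}

/-- The right part `R_A` of `mod A`: indecomposables all of whose successors have
injective dimension at most one. -/
def rightPart : Set A.Ind := {M | ∀ N, A.Path M N → A.idLeOne N}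

/-- `A` is almost laura: `rad^∞(M,N) = 0` for all indecomposables `M,N ∉ L_A ∪ R_A`. -/
def AlmostLaura : Prop :=
  ∀ ⦃M N : A.Ind⦄, M ∉ A.leftPart ∪ A.rightPart → N ∉ A.leftPart ∪ A.rightPart →
    ¬ A.RadInf M N

/-- `M` and `N` lie in the same connected component of the AR-quiver. -/
def SameComp : A.Ind → A.Ind → Prop :=
  Relation.EqvGen fun M N => A.Irr M N ∨ A.Irr N M

/-- `Γ` is a connected component of the AR-quiver `Γ(mod A)`. -/
def IsComponent (Γ : Set A.Ind) : Prop := ∃ X, Γ = {Y | A.SameComp X Y}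

/-- `Γ` is generalized standard: `rad^∞(M,N) = 0` for all `M, N ∈ Γ`. -/
def GenStandard (Γ : Set A.Ind) : Prop := ∀ M ∈ Γ, ∀ N ∈ Γ, ¬ A.RadInf M N

/-- `Γ` is convex: every module lying on a path between two modules of `Γ` is in `Γ`. -/
def Convex (Γ : Set A.Ind) : Prop :=
  ∀ M ∈ Γ, ∀ N ∈ Γ, ∀ Z, A.Path M Z → A.Path Z N → Z ∈ Γ

/-- `Γ` is a faithful component (it contains a faithful module); in particular every
indecomposable injective receives a nonzero morphism from a module of `Γ`, and every
indecomposable projective admits a nonzero morphism to a module of `Γ`. -/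
def FaithfulComp (Γ : Set A.Ind) : Prop :=
  (∀ I, A.Inj I → ∃ M ∈ Γ, A.HomNZ M I) ∧ (∀ P, A.Proj P → ∃ N ∈ Γ, A.HomNZ P N)

/-- `M` is directing: it lies on no cycle of nonzero non-isomorphisms. -/
def Directing (M : A.Ind) : Prop := ¬ Relation.TransGen A.RadHom M M

end ARData

/-- For an artin algebra `A`, the following are equivalent:
(a) `rad^∞(M,N) = 0` for all indecomposables `M, N ∉ L_A ∪ R_A`;
(b) `rad^∞(M,N) = 0` for all indecomposables `M ∉ L_A` and `N ∉ R_A`. -/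
theorem almostLaura_iff (A : ARData) :
    (∀ M N : A.Ind, M ∉ A.leftPart ∪ A.rightPart → N ∉ A.leftPart ∪ A.rightPart →
      ¬ A.RadInf M N) ↔
    (∀ M N : A.Ind, M ∉ A.leftPart → N ∉ A.rightPart → ¬ A.RadInf M N) := by
  constructor
  · intro h M N hM hN hr
    have hpath : A.Path M N :=
      Relation.ReflTransGen.single (A.homNZ_of_radHom (A.radHom_of_radInf hr))
    have hMR : M ∉ A.rightPart := fun hR => hN fun X hX => hR X (hpath.trans hX)
    have hNL : N ∉ A.leftPart := fun hL => hM fun X hX => hL X (hX.trans hpath)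
    exact h M N (fun h' => h'.elim hM hMR) (fun h' => h'.elim hNL hN) hr
  · intro h M N hM hN
    exact h M N (fun h' => hM (Or.inl h')) (fun h' => hN (Or.inr h'))
end

section
/- Let A be an artin algebra such that there is no infinite path from a module M with pd M ≥ 2 to a module N with id N ≥ 2. Then there is no infinite path from an indecomposable module not in L_A to an indecomposable module not in R_A. -/
/-- If there is no infinite path from a module of projective
dimension `≥ 2` to a module of injective dimension `≥ 2`, then there is no
infinite path from a module not in `L_A` to a module not in `R_A`. -/
theorem no_infPath_outside_leftPart_to_outside_rightPart (A : ARData)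
    (h : ∀ M N : A.Ind, ¬ A.pdLeOne M → ¬ A.idLeOne N → ¬ A.InfPath M N) :
    ∀ M N : A.Ind, M ∉ A.leftPart → N ∉ A.rightPart → ¬ A.InfPath M N := by
  intro M N hM hN ⟨X, Y, hMX, hXY, hYN⟩
  simp only [ARData.leftPart, Set.mem_setOf_eq, not_forall] at hM
  simp only [ARData.rightPart, Set.mem_setOf_eq, not_forall] at hN
  obtain ⟨M', hM'path, hM'pd⟩ := hM
  obtain ⟨N', hN'path, hN'id⟩ := hN
  exact h M' N' hM'pd hN'id ⟨X, Y, hM'path.trans hMX, hXY, hYN.trans hN'path⟩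
end
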